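/- Fix A > 0 and for B > 0 let λ*₀(B) := (3A/2)·[1 − 3(√B − tanh(√B))/(B·tanh(√B))]^{−1} and h₀*(B;x) := (λ*₀(B)/2)(1 − x²) − (λ*₀(B)/(√B·sinh(√B)))·[cosh(√B) − cosh(√B·x)]. Then for every x ∈ [−1,1], h₀*(B;x) → (3A/4)(1 − x²) as B → ∞. -/

import Mathlib

open Filter Real Topology

/-- The squared maximal sloshing frequency `λ*₀(B)` for `α = 0` with surface tension. -/
noncomputable def lamStar0 (A B : ℝ) : ℝ :=
  (3 * A / 2) * (1 - 3 * (Real.sqrt B - Real.tanh (Real.sqrt B)) /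
    (B * Real.tanh (Real.sqrt B)))⁻¹

/-- The optimal shallow canal cross-section `h₀*(B; x)` for `α = 0` with surface tension. -/
noncomputable def hStar0 (A B x : ℝ) : ℝ :=
  lamStar0 A B / 2 * (1 - x ^ 2) -
    lamStar0 A B / (Real.sqrt B * Real.sinh (Real.sqrt B)) *
      (Real.cosh (Real.sqrt B) - Real.cosh (Real.sqrt B * x))

/-! Since `tanh s → 1`, the correction `3(√B - tanh √B)/(B tanh √B) = 3/(√B tanh √B) - 3/B` inside
`λ*₀(B)` vanishes, so `λ*₀(B) → 3A/2`. For `|x| ≤ 1` the boundary-layer factor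
`(cosh √B - cosh (√B x))/(√B sinh √B)` lies between `0` and `1/(√B tanh √B)`, so it vanishes too,
leaving `(3A/2)/2 · (1 - x²)`. -/

namespace Real

theorem tanh_eq_one_sub_two_div (x : ℝ) : tanh x = 1 - 2 / (exp (2 * x) + 1) := by
  rw [tanh_eq, two_mul, exp_add, exp_neg]
  field_simp
  ring

theorem tendsto_tanh_atTop : Tendsto tanh atTop (𝓝 1) := by
  have h : Tendsto (fun x : ℝ => exp (2 * x) + 1) atTop atTop :=
    tendsto_atTop_add_const_right _ 1 (tendsto_exp_atTop.comp (tendsto_id.const_mul_atTop two_pos))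
  have hlim := ((tendsto_const_nhds (x := (2 : ℝ))).div_atTop h).const_sub (1 : ℝ)
  rw [sub_zero] at hlim
  exact hlim.congr fun x => (tanh_eq_one_sub_two_div x).symm

theorem tanh_pos {x : ℝ} (hx : 0 < x) : 0 < tanh x := by
  rw [tanh_eq_sinh_div_cosh]
  exact div_pos (sinh_pos_iff.mpr hx) (cosh_pos x)

theorem tendsto_inv_mul_tanh_atTop : Tendsto (fun s => (s * tanh s)⁻¹) atTop (𝓝 0) :=
  (tendsto_id.atTop_mul_pos one_pos tendsto_tanh_atTop).inv_tendsto_atTop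

theorem tendsto_cosh_sub_cosh_mul_div {x : ℝ} (hx : |x| ≤ 1) :
    Tendsto (fun s => (cosh s - cosh (s * x)) / (s * sinh s)) atTop (𝓝 0) := by
  refine tendsto_of_tendsto_of_tendsto_of_le_of_le' tendsto_const_nhds
    tendsto_inv_mul_tanh_atTop ?_ ?_ <;>
    filter_upwards [eventually_gt_atTop 0] with s hs
  · have hcosh : cosh (s * x) ≤ cosh s := by
      rw [cosh_le_cosh, abs_mul, abs_of_pos hs]
      exact mul_le_of_le_one_right hs.le hx
    exact div_nonneg (sub_nonneg.mpr hcosh) (mul_pos hs (sinh_pos_iff.mpr hs)).le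
  · rw [tanh_eq_sinh_div_cosh, mul_div_assoc', inv_div]
    gcongr
    linarith [one_le_cosh (s * x)]

end Real

theorem lamStar0_eq (A : ℝ) {B : ℝ} (hB : 0 < B) :
    lamStar0 A B = 3 * A / 2 * (1 - (3 * (√B * tanh √B)⁻¹ - 3 * B⁻¹))⁻¹ := by
  have hs : 0 < √B := sqrt_pos.mpr hB
  have ht := tanh_pos hs
  have hsq : √B ^ 2 = B := sq_sqrt hB.le
  rw [lamStar0]
  congr 3
  field_simp
  linear_combination hsq

theorem tendsto_lamStar0 (A : ℝ) : Tendsto (lamStar0 A) atTop (𝓝 (3 * A / 2)) := by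
  have hcorr : Tendsto (fun B => 3 * (√B * tanh √B)⁻¹ - 3 * B⁻¹) atTop (𝓝 0) := by
    simpa using ((tendsto_inv_mul_tanh_atTop.comp tendsto_sqrt_atTop).const_mul 3).sub
      (tendsto_inv_atTop_zero.const_mul 3)
  have hlim := ((hcorr.const_sub 1).inv₀ (by norm_num)).const_mul (3 * A / 2)
  rw [sub_zero, inv_one, mul_one] at hlim
  exact hlim.congr' (eventually_gt_atTop 0 |>.mono fun B hB => (lamStar0_eq A hB).symm)

theorem hStar0_zero_surface_tension_limit_general (A : ℝ)
    (x : ℝ) (hx : x ∈ Set.Icc (-1 : ℝ) 1) :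
    Filter.Tendsto (fun B => hStar0 A B x) Filter.atTop
      (nhds (3 * A / 4 * (1 - x ^ 2))) := by
  have hlam := tendsto_lamStar0 A
  have hratio := (tendsto_cosh_sub_cosh_mul_div (abs_le.mpr hx)).comp tendsto_sqrt_atTop
  convert ((hlam.div_const 2).mul_const (1 - x ^ 2)).sub (hlam.mul hratio) using 1
  · funext B
    simp only [hStar0, Function.comp_apply]
    ring
  · congr 1
    ring

theorem hStar0_zero_surface_tension_limit (A : ℝ) (hA : 0 < A)
    (x : ℝ) (hx : x ∈ Set.Icc (-1 : ℝ) 1) :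
    Filter.Tendsto (fun B => hStar0 A B x) Filter.atTop
      (nhds (3 * A / 4 * (1 - x ^ 2))) :=
  hStar0_zero_surface_tension_limit_general A x hx
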